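/- Let $(P, \Theta, \omega)$ be a premulticontact manifold with characteristic distribution $\mathcal{C}$ of rank $k > 0$. Then, in an adapted chart with $\omega = \mathrm{d}^m x$, there exist local Reeb vector fields $\{R_\mu\}_{\mu=1}^m$ such that $\mathfrak{R} = \langle R_\mu \rangle + \Gamma(\mathcal{C})$ and $i(R_\mu)\Theta = \mathrm{d}^{m-1}x_\mu$; they are unique up to the addition of sections of $\mathcal{C}$, and $[R_\mu, R_\nu] \in \Gamma(\mathcal{C})$. -/

import Mathlib

/-!
Each `θ_μ` is semibasic, so the premulticontact axiom writes it as `i(R_μ)Θ` for a Reeb field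
`R_μ`. At each point, `v ↦ i(v)Θ` maps the Reeb space onto the span of the `θ_μ` with kernel `𝒞`,
by counting ranks; this gives both the decomposition `𝕽 = ⟨R_μ⟩ + Γ(𝒞)` and the uniqueness.
For the brackets, Cartan calculus shows that `[R_μ, R_ν]` is again Reeb (`i(R)dΘ` is a multiple
of the closed form `ω`) and that `i([R_μ, R_ν])Θ = 0` because the `θ_μ` are closed and
semibasic; when `m = 0` there is only one field and its self-bracket vanishes.
-/

open scoped BigOperators

noncomputable section

/-- Vector fields on `P` in a trivialized model with tangent model space `E`. -/
abbrev VF (P E : Type) := P → E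

/-- Differential `k`-forms on `P` in the trivialized model: a pointwise alternating `k`-form. -/
abbrev Form (P E : Type) [AddCommGroup E] [Module ℝ E] (k : ℕ) :=
  P → AlternatingMap ℝ E ℝ (Fin k)

variable {P E : Type} [AddCommGroup E] [Module ℝ E]

/-- Interior product (contraction) of a vector field with a `(k+1)`-form. -/
def iotaF {k : ℕ} (X : VF P E) (α : Form P E (k + 1)) : Form P E k :=
  fun p => (α p).curryLeft (X p)

/-- Multiplication of a form by a function. -/
def fsmul {k : ℕ} (g : P → ℝ) (β : Form P E k) : Form P E k := fun p => g p • β p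

/-- A function regarded as a `0`-form. -/
def toF0 (g : P → ℝ) : Form P E 0 := fun p => AlternatingMap.constOfIsEmpty ℝ E (Fin 0) (g p)

/-- The pointwise wedge product of alternating forms. -/
def altWedge {j k : ℕ} (f : AlternatingMap ℝ E ℝ (Fin j))
    (g : AlternatingMap ℝ E ℝ (Fin k)) : AlternatingMap ℝ E ℝ (Fin (j + k)) :=
  (LinearMap.mul' ℝ ℝ).compAlternatingMap ((f.domCoprod g).domDomCongr finSumFinEquiv)

/-- Pointwise wedge of a `1`-form with a `k`-form. -/
def w1p {k : ℕ} (σ : AlternatingMap ℝ E ℝ (Fin 1))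
    (β : AlternatingMap ℝ E ℝ (Fin k)) : AlternatingMap ℝ E ℝ (Fin (k + 1)) :=
  (altWedge σ β).domDomCongr (finCongr (Nat.add_comm 1 k))

/-- Pointwise wedge of a `2`-form with a `k`-form. -/
def w2p {k : ℕ} (γ : AlternatingMap ℝ E ℝ (Fin 2))
    (β : AlternatingMap ℝ E ℝ (Fin k)) : AlternatingMap ℝ E ℝ (Fin (k + 2)) :=
  (altWedge γ β).domDomCongr (finCongr (Nat.add_comm 2 k))

/-- Wedge of a `1`-form with a `k`-form, at the level of forms on `P`. -/
def w1F {k : ℕ} (σ : Form P E 1) (β : Form P E k) : Form P E (k + 1) :=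
  fun p => w1p (σ p) (β p)

/-- Wedge of a `2`-form with a `k`-form, at the level of forms on `P`. -/
def w2F {k : ℕ} (γ : Form P E 2) (β : Form P E k) : Form P E (k + 2) :=
  fun p => w2p (γ p) (β p)

/-- An abstract differential calculus on the trivialized model `P × E`:
an exterior derivative, a Lie bracket of vector fields and a Lie derivative,
satisfying the usual Cartan calculus identities. -/
structure DiffCalc (P E : Type) [AddCommGroup E] [Module ℝ E] where
  d : ∀ {k : ℕ}, Form P E k → Form P E (k + 1)
  bracket : VF P E → VF P E → VF P E
  lieD : VF P E → ∀ {k : ℕ}, Form P E k → Form P E k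
  d_add : ∀ {k : ℕ} (α β : Form P E k), d (α + β) = d α + d β
  d_smul : ∀ {k : ℕ} (c : ℝ) (α : Form P E k), d (c • α) = c • d α
  d_d : ∀ {k : ℕ} (α : Form P E k), d (d α) = 0
  cartan : ∀ (X : VF P E) {k : ℕ} (α : Form P E (k + 1)),
    lieD X α = iotaF X (d α) + d (iotaF X α)
  lie_iota : ∀ (X Y : VF P E) {k : ℕ} (α : Form P E (k + 1)),
    lieD X (iotaF Y α) = iotaF (bracket X Y) α + iotaF Y (lieD X α)
  lieD_add : ∀ (X : VF P E) {k : ℕ} (α β : Form P E k),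
    lieD X (α + β) = lieD X α + lieD X β
  leibniz_fun : ∀ (g : P → ℝ) {k : ℕ} (β : Form P E k),
    d (fsmul g β) = w1F (d (toF0 g)) β + fsmul g (d β)
  leibniz_one : ∀ (σ : Form P E 1) {k : ℕ} (β : Form P E k),
    d (w1F σ β) = w2F (d σ) β - w1F σ (d β)

/-- The kernel (at `p`) of a form of positive degree. -/
def kerSet {k : ℕ} (ω : Form P E (k + 1)) (p : P) : Set E :=
  {v | (ω p).curryLeft v = 0}

/-- The rank of a subset of the tangent model: the dimension of its span. -/
def rk (S : Set E) : ℕ := Module.finrank ℝ (Submodule.span ℝ S)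

/-- A `j`-form is semibasic (annihilated by `ker ω`) ; every `0`-form is semibasic. -/
def SemibasicPt {m : ℕ} (ω : Form P E (m + 1)) : ∀ {j : ℕ}, Form P E j → Prop
  | 0, _ => True
  | _ + 1, α => ∀ p, ∀ v ∈ kerSet ω p, (α p).curryLeft v = 0

/-- The Reeb "distribution" at a point `p`: tangent vectors in `ker ω` whose contraction with
`dΘ` is annihilated by `ker ω`. -/
def reebSet (C : DiffCalc P E) {m : ℕ} (Θ ω : Form P E (m + 1)) (p : P) : Set E :=
  {v | v ∈ kerSet ω p ∧ ∀ w ∈ kerSet ω p, (((C.d Θ) p).curryLeft v).curryLeft w = 0}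

/-- The characteristic distribution `ker ω ∩ ker Θ ∩ ker dΘ` at a point. -/
def charSet (C : DiffCalc P E) {m : ℕ} (Θ ω : Form P E (m + 1)) (p : P) : Set E :=
  {v | v ∈ kerSet ω p ∧ (Θ p).curryLeft v = 0 ∧ ((C.d Θ) p).curryLeft v = 0}

/-- A Reeb vector field: a section of the Reeb distribution. -/
def IsReebField (C : DiffCalc P E) {m : ℕ} (Θ ω : Form P E (m + 1)) (R : VF P E) : Prop :=
  ∀ p, R p ∈ reebSet C Θ ω p

/-- Definition of a premulticontact structure `(Θ, ω)` on `P` (degrees `m+1`, i.e. `dim M = m+1`):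
`ω` is closed, `ker ω` has constant rank `N`, the Reeb distribution has rank `(m+1)+k`, the
characteristic distribution has rank `k`, and the semibasic `m`-forms are exactly the
contractions `i(R)Θ` with Reeb vector fields `R`.  For `k = 0` this is a multicontact
structure. -/
structure IsPremulticontact (C : DiffCalc P E) (m N k : ℕ) (Θ ω : Form P E (m + 1)) :
    Prop where
  dim_eq : Module.finrank ℝ E = (m + 1) + N
  k_le : k ≤ N - (m + 1)
  closed : C.d ω = 0
  rank_ker : ∀ p, rk (kerSet ω p) = N
  rank_reeb : ∀ p, rk (reebSet C Θ ω p) = (m + 1) + k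
  rank_char : ∀ p, rk (charSet C Θ ω p) = k
  reeb_semibasic :
    {α : Form P E m | SemibasicPt ω α} =
      {α : Form P E m | ∃ R : VF P E, IsReebField C Θ ω R ∧ α = iotaF R Θ}

namespace AlternatingMap

section CommRing

variable {R M N : Type*} [CommRing R] [AddCommGroup M] [Module R M] [AddCommGroup N] [Module R N]
  {n : ℕ}

lemma curryLeft_sub (f g : M [⋀^Fin (n + 1)]→ₗ[R] N) :
    (f - g).curryLeft = f.curryLeft - g.curryLeft :=
  map_sub curryLeftLinearMap f g

lemma map_eq_zero_of_curryLeft_eq_zero (f : M [⋀^Fin (n + 1)]→ₗ[R] N) {x : M}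
    (hx : f.curryLeft x = 0) {u : Fin (n + 1) → M} {j : Fin (n + 1)} (hj : u j = x) :
    f u = 0 := by
  have at_zero : ∀ w : Fin (n + 1) → M, w 0 = x → f w = 0 := fun w hw => by
    rw [← Fin.cons_self_tail w, hw]
    exact DFunLike.congr_fun hx (Fin.tail w)
  rcases eq_or_ne j 0 with rfl | hj0
  · exact at_zero u hj
  · have hswap := f.map_swap u hj0.symm
    rwa [at_zero _ (by simp [hj]), eq_comm, neg_eq_zero] at hswap

end CommRing

variable {K M N : Type*} [Field K] [AddCommGroup M] [Module K M] [AddCommGroup N] [Module K N]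
  {n : ℕ}

lemma eq_of_curryLeft_eq_zero_of_isCompl {U W : Submodule K M} (hUW : IsCompl U W)
    (bW : Module.Basis (Fin (n + 1)) K W) {f g : M [⋀^Fin (n + 1)]→ₗ[K] N}
    (hf : ∀ v ∈ U, f.curryLeft v = 0) (hg : ∀ v ∈ U, g.curryLeft v = 0)
    (hfg : f (fun i => bW i) = g (fun i => bW i)) : f = g := by
  classical
  let bM := ((Module.Basis.ofVectorSpace K U).prod bW).map
    (Submodule.prodEquivOfIsCompl U W hUW)
  have hbM_inl : ∀ y, bM (Sum.inl y) ∈ U := fun y => by simp [bM]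
  have hbM_inr : ∀ y, bM (Sum.inr y) = bW y := fun y => by simp [bM]
  refine bM.ext_alternating fun v hv => ?_
  by_cases hU : ∃ i y, v i = Sum.inl y
  · obtain ⟨i, y, hi⟩ := hU
    have hmem : bM (v i) ∈ U := hi ▸ hbM_inl y
    rw [map_eq_zero_of_curryLeft_eq_zero f (hf _ hmem) rfl,
      map_eq_zero_of_curryLeft_eq_zero g (hg _ hmem) rfl]
  · push Not at hU
    have hW : ∀ i, ∃ y, v i = Sum.inr y := fun i => by
      cases h : v i with
      | inl y => exact absurd h (hU i y)
      | inr y => exact ⟨y, rfl⟩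
    choose τ hτ using hW
    have hτ_inj : Function.Injective τ := fun i i' h => hv (by rw [hτ, hτ, h])
    let σ := Equiv.ofBijective τ (Finite.injective_iff_bijective.mp hτ_inj)
    have hperm : (fun i => bM (v i)) = (fun i => (bW i : M)) ∘ σ := by
      funext i
      simp [σ, hτ, hbM_inr]
    rw [hperm, map_perm, map_perm, hfg]

lemma exists_eq_smul_of_curryLeft_eq_zero [FiniteDimensional K M] {U : Submodule K M}
    (hU : Module.finrank K U + (n + 1) = Module.finrank K M) {ω b : M [⋀^Fin (n + 1)]→ₗ[K] K}
    (hω₀ : ω ≠ 0) (hω : ∀ v ∈ U, ω.curryLeft v = 0) (hb : ∀ v ∈ U, b.curryLeft v = 0) :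
    ∃ c : K, b = c • ω := by
  obtain ⟨W, hUW⟩ := Submodule.exists_isCompl U
  have hW : Module.finrank K W = n + 1 := by
    have := Submodule.finrank_add_eq_of_isCompl hUW
    omega
  let bW := (Module.finBasis K W).reindex (finCongr hW)
  let w : Fin (n + 1) → M := fun i => bW i
  have hωw : ω w ≠ 0 := fun h =>
    hω₀ (eq_of_curryLeft_eq_zero_of_isCompl hUW bW hω (fun _ _ => by simp) (by simpa using h))
  refine ⟨b w / ω w, eq_of_curryLeft_eq_zero_of_isCompl hUW bW hb ?_ ?_⟩
  · intro v hv
    simp [hω v hv]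
  · simp [w, div_mul_cancel₀ _ hωw]

end AlternatingMap

lemma eq_zero_of_forall_curryLeft_eq_zero {K M : Type*} [Field K] [AddCommGroup M] [Module K M]
    (hM : 2 ≤ Module.finrank K M) {v : M}
    (h : ∀ β : M [⋀^Fin 2]→ₗ[K] K, β.curryLeft v = 0) : v = 0 := by
  have : FiniteDimensional K M := Module.finite_of_finrank_pos (by omega)
  have : Nontrivial (Fin (Module.finrank K M)) := Fin.nontrivial_iff_two_le.mpr hM
  let b := Module.finBasis K M
  refine b.forall_coord_eq_zero_iff.mp fun i => ?_
  obtain ⟨j, hji⟩ := exists_ne i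
  -- `β (x, y) = xᵢ yⱼ - xⱼ yᵢ`, so that `β (v, bⱼ) = vᵢ`
  let β := Matrix.detRowAlternating.compLinearMap (LinearMap.pi ![b.coord i, b.coord j])
  have := DFunLike.congr_fun (h β) ![b j]
  change Matrix.det (Matrix.of fun s t : Fin 2 =>
    LinearMap.pi ![b.coord i, b.coord j] (![v, b j] s) t) = 0 at this
  rw [Matrix.det_fin_two] at this
  simpa [hji] using this

lemma LinearMap.ker_eq_and_range_eq_of_finrank_le {K V M : Type*} [Field K] [AddCommGroup V]
    [Module K V] [FiniteDimensional K V] [AddCommGroup M] [Module K M] (T : V →ₗ[K] M)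
    {A : Submodule K V} {B : Submodule K M} (hA : A ≤ LinearMap.ker T)
    (hB : B ≤ LinearMap.range T)
    (h : Module.finrank K V ≤ Module.finrank K A + Module.finrank K B) :
    LinearMap.ker T = A ∧ LinearMap.range T = B := by
  have := T.finrank_range_add_finrank_ker
  have := Submodule.finrank_mono hA
  have := Submodule.finrank_mono hB
  exact ⟨(Submodule.eq_of_le_of_finrank_le hA (by omega)).symm,
    (Submodule.eq_of_le_of_finrank_le hB (by omega)).symm⟩

/-- Every summand of the shuffle expansion of `a ∧ b` feeds at least one of `u i`, `u j` to `b`. -/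
lemma w1p_apply_eq_zero {q : ℕ} (a : AlternatingMap ℝ E ℝ (Fin 1))
    (b : AlternatingMap ℝ E ℝ (Fin (q + 1))) {u : Fin (q + 2) → E} {i j : Fin (q + 2)}
    (hij : i ≠ j) (hi : b.curryLeft (u i) = 0) (hj : b.curryLeft (u j) = 0) :
    w1p a b u = 0 := by
  let e : Fin 1 ⊕ Fin (q + 1) ≃ Fin (q + 2) :=
    finSumFinEquiv.trans (finCongr (Nat.add_comm 1 (q + 1)))
  suffices h : a.domCoprod b (u ∘ e) = 0 by
    change LinearMap.mul' ℝ ℝ (a.domCoprod b (u ∘ e)) = 0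
    rw [h, map_zero]
  rw [AlternatingMap.domCoprod_apply, sum_apply]
  refine Finset.sum_eq_zero fun σ _ => ?_
  induction σ using Quotient.inductionOn' with
  | h π =>
    have hb : b (fun y => u (e (π (Sum.inr y)))) = 0 := by
      have hne : π.symm (e.symm i) ≠ π.symm (e.symm j) := by simpa using hij
      rcases hπi : π.symm (e.symm i) with y | y
      · rcases hπj : π.symm (e.symm j) with z | z
        · exact absurd (by rw [hπi, hπj, Subsingleton.elim y z]) hne
        · exact b.map_eq_zero_of_curryLeft_eq_zero hj (j := z) (by simp [← hπj])
      · exact b.map_eq_zero_of_curryLeft_eq_zero hi (j := y) (by simp [← hπi])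
    rw [AlternatingMap.domCoprod.summand_mk'', smul_apply,
      MultilinearMap.domDomCongr_apply, MultilinearMap.domCoprod_apply]
    change _ • (_ ⊗ₜ b (fun y => u (e (π (Sum.inr y))))) = 0
    rw [hb, TensorProduct.tmul_zero, smul_zero]

lemma w1p_curryLeft_curryLeft_eq_zero {q : ℕ} (a : AlternatingMap ℝ E ℝ (Fin 1))
    (b : AlternatingMap ℝ E ℝ (Fin (q + 1))) {x w : E}
    (hx : b.curryLeft x = 0) (hw : b.curryLeft w = 0) :
    ((w1p a b).curryLeft x).curryLeft w = 0 := by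
  ext r
  exact w1p_apply_eq_zero a b (i := 0) (j := 1) Fin.zero_ne_one (by simpa using hx)
    (by simpa using hw)

@[simp]
lemma iotaF_add {k : ℕ} (X : VF P E) (α β : Form P E (k + 1)) :
    iotaF X (α + β) = iotaF X α + iotaF X β := by
  funext p
  simp [iotaF]

@[simp]
lemma iotaF_zero {k : ℕ} (X : VF P E) : iotaF X (0 : Form P E (k + 1)) = 0 := by
  funext p
  simp [iotaF]

lemma iotaF_iotaF_self {k : ℕ} (X : VF P E) (α : Form P E (k + 2)) : iotaF X (iotaF X α) = 0 :=
  funext fun _ => AlternatingMap.curryLeft_same _ _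

@[simp]
lemma fsmul_zero {k : ℕ} (g : P → ℝ) : fsmul g (0 : Form P E k) = 0 := by
  funext p
  simp [fsmul]

namespace DiffCalc

variable (C : DiffCalc P E)

@[simp]
lemma d_zero {k : ℕ} : C.d (0 : Form P E k) = 0 := by
  simpa using C.d_smul 0 0

@[simp]
lemma lieD_zero (X : VF P E) {k : ℕ} : C.lieD X (0 : Form P E k) = 0 := by
  simpa using C.lieD_add X (0 : Form P E k) 0

lemma iotaF_bracket (X Y : VF P E) {k : ℕ} (α : Form P E (k + 1)) :
    iotaF (C.bracket X Y) α = C.lieD X (iotaF Y α) - iotaF Y (C.lieD X α) :=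
  eq_sub_of_add_eq (C.lie_iota X Y α).symm

lemma lieD_of_d_eq_zero {X : VF P E} {k : ℕ} {α : Form P E (k + 1)} (hα : C.d α = 0) :
    C.lieD X α = C.d (iotaF X α) := by
  rw [C.cartan, hα, iotaF_zero, zero_add]

lemma lieD_of_iotaF_eq_zero {X : VF P E} {k : ℕ} {α : Form P E (k + 1)} (hα : iotaF X α = 0) :
    C.lieD X α = iotaF X (C.d α) := by
  rw [C.cartan, hα, d_zero, add_zero]

lemma iotaF_bracket_self (X : VF P E) {k : ℕ} (α : Form P E (k + 2)) :
    iotaF (C.bracket X X) α = 0 := by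
  rw [C.iotaF_bracket, C.lieD_of_iotaF_eq_zero (iotaF_iotaF_self X α), C.cartan, iotaF_add,
    iotaF_iotaF_self, zero_add, sub_self]

lemma bracket_self_eq_zero (hE : 2 ≤ Module.finrank ℝ E) (X : VF P E) : C.bracket X X = 0 :=
  funext fun p => eq_zero_of_forall_curryLeft_eq_zero hE fun β =>
    congrFun (C.iotaF_bracket_self X fun _ => β) p

lemma iotaF_bracket_eq_zero_of_d_eq_zero {X Y : VF P E} {k : ℕ} {α : Form P E (k + 1)}
    (hα : C.d α = 0) (hX : iotaF X α = 0) (hY : iotaF Y α = 0) :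
    iotaF (C.bracket X Y) α = 0 := by
  rw [C.iotaF_bracket, hY, lieD_zero, C.lieD_of_d_eq_zero hα, hX, d_zero, iotaF_zero, sub_self]

end DiffCalc

def kerSub {m : ℕ} (ω : Form P E (m + 1)) (p : P) : Submodule ℝ E :=
  LinearMap.ker (ω p).curryLeft

def reebSub (C : DiffCalc P E) {m : ℕ} (Θ ω : Form P E (m + 1)) (p : P) : Submodule ℝ E where
  carrier := reebSet C Θ ω p
  zero_mem' := by simp [reebSet, kerSet]
  add_mem' := by
    rintro a b ⟨ha, ha'⟩ ⟨hb, hb'⟩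
    exact ⟨by simp_all [kerSet], fun w hw => by simp [ha' w hw, hb' w hw]⟩
  smul_mem' := by
    rintro c a ⟨ha, ha'⟩
    exact ⟨by simp_all [kerSet], fun w hw => by simp [ha' w hw]⟩

-- Membership unfolds definitionally to `v ∈ charSet C Θ ω p`.
def charSub (C : DiffCalc P E) {m : ℕ} (Θ ω : Form P E (m + 1)) (p : P) : Submodule ℝ E :=
  kerSub ω p ⊓ (LinearMap.ker (Θ p).curryLeft ⊓ LinearMap.ker (C.d Θ p).curryLeft)

lemma charSub_le_reebSub (C : DiffCalc P E) {m : ℕ} (Θ ω : Form P E (m + 1)) (p : P) :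
    charSub C Θ ω p ≤ reebSub C Θ ω p :=
  fun v ⟨hω, _, hdΘ⟩ => ⟨hω, fun w _ => by simp [show (C.d Θ p).curryLeft v = 0 from hdΘ]⟩

lemma rk_coe (S : Submodule ℝ E) : rk (S : Set E) = Module.finrank ℝ S := by
  rw [rk, Submodule.span_eq]

namespace IsReebField

variable {C : DiffCalc P E} {m : ℕ} {Θ ω : Form P E (m + 1)} {X Y : VF P E}

lemma iotaF_omega (hX : IsReebField C Θ ω X) : iotaF X ω = 0 :=
  funext fun p => (hX p).1

lemma iotaF_iotaF_d (hX : IsReebField C Θ ω X) (hY : iotaF Y ω = 0) :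
    iotaF Y (iotaF X (C.d Θ)) = 0 :=
  funext fun p => (hX p).2 (Y p) (congrFun hY p)

end IsReebField

namespace IsPremulticontact

variable {C : DiffCalc P E} {m N k : ℕ} {Θ ω : Form P E (m + 1)} {X Y : VF P E}

lemma finrank_kerSub (hpmc : IsPremulticontact C m N k Θ ω) (p : P) :
    Module.finrank ℝ (kerSub ω p) = N :=
  (rk_coe _).symm.trans (hpmc.rank_ker p)

lemma finrank_reebSub (hpmc : IsPremulticontact C m N k Θ ω) (p : P) :
    Module.finrank ℝ (reebSub C Θ ω p) = m + 1 + k :=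
  (rk_coe _).symm.trans (hpmc.rank_reeb p)

lemma finrank_charSub (hpmc : IsPremulticontact C m N k Θ ω) (p : P) :
    Module.finrank ℝ (charSub C Θ ω p) = k :=
  (rk_coe _).symm.trans (hpmc.rank_char p)

/-- Rank–nullity: `𝒞` (rank `k`) lies in the kernel and the `θ μ` (rank `m + 1`) in the image,
which already exhausts the rank `m + 1 + k` of the Reeb space. -/
lemma ker_and_range_curryLeft_reebSub (hpmc : IsPremulticontact C m N k Θ ω) {p : P}
    {θ : Fin (m + 1) → AlternatingMap ℝ E ℝ (Fin m)} (hθ : LinearIndependent ℝ θ)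
    {r : Fin (m + 1) → E} (hr : ∀ μ, r μ ∈ reebSet C Θ ω p)
    (hrθ : ∀ μ, (Θ p).curryLeft (r μ) = θ μ) :
    LinearMap.ker ((Θ p).curryLeft.domRestrict (reebSub C Θ ω p)) =
        (charSub C Θ ω p).comap (reebSub C Θ ω p).subtype ∧
      LinearMap.range ((Θ p).curryLeft.domRestrict (reebSub C Θ ω p)) =
        Submodule.span ℝ (Set.range θ) := by
  have : FiniteDimensional ℝ E :=
    Module.finite_of_finrank_pos (by rw [hpmc.dim_eq]; omega)
  refine LinearMap.ker_eq_and_range_eq_of_finrank_le _ (fun v hv => hv.2.1) ?_ ?_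
  · rw [Submodule.span_le]
    rintro _ ⟨μ, rfl⟩
    exact ⟨⟨r μ, hr μ⟩, hrθ μ⟩
  · rw [(Submodule.comapSubtypeEquivOfLe (charSub_le_reebSub C Θ ω p)).finrank_eq,
      finrank_span_eq_card hθ, hpmc.finrank_reebSub, hpmc.finrank_charSub]
    simp [add_comm]


lemma mem_charSet_of_curryLeft_eq_zero (hpmc : IsPremulticontact C m N k Θ ω) {p : P}
    {θ : Fin (m + 1) → AlternatingMap ℝ E ℝ (Fin m)} (hθ : LinearIndependent ℝ θ)
    {r : Fin (m + 1) → E} (hr : ∀ μ, r μ ∈ reebSet C Θ ω p)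
    (hrθ : ∀ μ, (Θ p).curryLeft (r μ) = θ μ) {v : E} (hv : v ∈ reebSet C Θ ω p)
    (hv₀ : (Θ p).curryLeft v = 0) : v ∈ charSet C Θ ω p := by
  have hmem : (⟨v, hv⟩ : reebSub C Θ ω p) ∈
      LinearMap.ker ((Θ p).curryLeft.domRestrict (reebSub C Θ ω p)) := hv₀
  rwa [(hpmc.ker_and_range_curryLeft_reebSub hθ hr hrθ).1] at hmem

lemma exists_curryLeft_eq_sum (hpmc : IsPremulticontact C m N k Θ ω) {p : P}
    {θ : Fin (m + 1) → AlternatingMap ℝ E ℝ (Fin m)} (hθ : LinearIndependent ℝ θ)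
    {r : Fin (m + 1) → E} (hr : ∀ μ, r μ ∈ reebSet C Θ ω p)
    (hrθ : ∀ μ, (Θ p).curryLeft (r μ) = θ μ) {v : E} (hv : v ∈ reebSet C Θ ω p) :
    ∃ c : Fin (m + 1) → ℝ, (Θ p).curryLeft v = ∑ μ, c μ • θ μ := by
  have hmem : (Θ p).curryLeft v ∈
      LinearMap.range ((Θ p).curryLeft.domRestrict (reebSub C Θ ω p)) := ⟨⟨v, hv⟩, rfl⟩
  rw [(hpmc.ker_and_range_curryLeft_reebSub hθ hr hrθ).2,
    Submodule.mem_span_range_iff_exists_fun] at hmem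
  obtain ⟨c, hc⟩ := hmem
  exact ⟨c, hc.symm⟩

lemma exists_isReebField_iotaF_eq (hpmc : IsPremulticontact C m N k Θ ω) {α : Form P E m}
    (hα : SemibasicPt ω α) : ∃ R, IsReebField C Θ ω R ∧ iotaF R Θ = α := by
  obtain ⟨R, hR, rfl⟩ : α ∈ {α : Form P E m | ∃ R, IsReebField C Θ ω R ∧ α = iotaF R Θ} :=
    hpmc.reeb_semibasic ▸ hα
  exact ⟨R, hR, rfl⟩

lemma semibasicPt_iotaF (hpmc : IsPremulticontact C m N k Θ ω) (hX : IsReebField C Θ ω X) :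
    SemibasicPt ω (iotaF X Θ) := by
  have hmem : iotaF X Θ ∈ {α : Form P E m | ∃ R, IsReebField C Θ ω R ∧ α = iotaF R Θ} :=
    ⟨X, hX, rfl⟩
  exact (hpmc.reeb_semibasic ▸ hmem :)

lemma apply_ne_zero (hpmc : IsPremulticontact C m N k Θ ω) (p : P) : ω p ≠ 0 := by
  intro h
  have htop : kerSub ω p = ⊤ := by simp [kerSub, h]
  have := hpmc.finrank_kerSub p
  rw [htop, finrank_top, hpmc.dim_eq] at this
  omega

/-- `i(X)dΘ` is annihilated by `ker ω`, hence proportional to `ω`. -/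
lemma exists_iotaF_d_eq_fsmul (hpmc : IsPremulticontact C m N k Θ ω)
    (hX : IsReebField C Θ ω X) : ∃ f : P → ℝ, iotaF X (C.d Θ) = fsmul f ω := by
  have : FiniteDimensional ℝ E := Module.finite_of_finrank_pos (by rw [hpmc.dim_eq]; omega)
  choose f hf using fun p => AlternatingMap.exists_eq_smul_of_curryLeft_eq_zero
    (U := kerSub ω p) (by rw [hpmc.finrank_kerSub, hpmc.dim_eq, add_comm])
    (hpmc.apply_ne_zero p) (fun _ hv => hv) (fun v hv => (hX p).2 v hv)
  exact ⟨f, funext hf⟩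

lemma isReebField_bracket (hpmc : IsPremulticontact C m N k Θ ω) (hX : IsReebField C Θ ω X)
    (hY : IsReebField C Θ ω Y) : IsReebField C Θ ω (C.bracket X Y) := by
  obtain ⟨fX, hfX⟩ := hpmc.exists_iotaF_d_eq_fsmul hX
  obtain ⟨fY, hfY⟩ := hpmc.exists_iotaF_d_eq_fsmul hY
  have hd : ∀ f : P → ℝ, C.d (fsmul f ω) = w1F (C.d (toF0 f)) ω := fun f => by
    rw [C.leibniz_fun, hpmc.closed, fsmul_zero, add_zero]
  have hbracket : iotaF (C.bracket X Y) (C.d Θ) =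
      iotaF X (w1F (C.d (toF0 fY)) ω) - iotaF Y (w1F (C.d (toF0 fX)) ω) := by
    rw [C.iotaF_bracket, C.lieD_of_iotaF_eq_zero (hY.iotaF_iotaF_d hX.iotaF_omega),
      C.lieD_of_d_eq_zero (C.d_d Θ), hfX, hfY, hd, hd]
  have hω : iotaF (C.bracket X Y) ω = 0 :=
    C.iotaF_bracket_eq_zero_of_d_eq_zero hpmc.closed hX.iotaF_omega hY.iotaF_omega
  refine fun p => ⟨congrFun hω p, fun w hw => ?_⟩
  change ((iotaF (C.bracket X Y) (C.d Θ)) p).curryLeft w = 0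
  rw [hbracket, Pi.sub_apply, AlternatingMap.curryLeft_sub, LinearMap.sub_apply]
  simp only [iotaF, w1F]
  rw [w1p_curryLeft_curryLeft_eq_zero _ _ (hX p).1 hw,
    w1p_curryLeft_curryLeft_eq_zero _ _ (hY p).1 hw, sub_zero]

end IsPremulticontact

namespace IsPremulticontact

variable {C : DiffCalc P E} {N k : ℕ} {X Y : VF P E}

lemma iotaF_bracket_eq_zero_of_closed {m : ℕ} {Θ ω : Form P E (m + 1 + 1)}
    (hpmc : IsPremulticontact C (m + 1) N k Θ ω) (hX : IsReebField C Θ ω X)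
    (hY : IsReebField C Θ ω Y) (hXd : C.d (iotaF X Θ) = 0) (hYd : C.d (iotaF Y Θ) = 0) :
    iotaF (C.bracket X Y) Θ = 0 := by
  have hXY : iotaF X (iotaF Y Θ) = 0 :=
    funext fun p => hpmc.semibasicPt_iotaF hY p (X p) (hX p).1
  rw [C.iotaF_bracket, C.lieD_of_d_eq_zero hYd, hXY, C.d_zero, C.cartan, hXd, add_zero,
    hX.iotaF_iotaF_d hY.iotaF_omega, sub_zero]

/-- For `m = 0` there is a single field `R`, and `[R, R] = 0` because `dim E ≥ 2`. -/
lemma iotaF_bracket_family_eq_zero {m : ℕ} {Θ ω : Form P E (m + 1)}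
    (hpmc : IsPremulticontact C m N k Θ ω) (hk : 0 < k) {R : Fin (m + 1) → VF P E}
    (hR : ∀ μ, IsReebField C Θ ω (R μ)) (hRd : ∀ μ, C.d (iotaF (R μ) Θ) = 0) (μ ν : Fin (m + 1)) :
    iotaF (C.bracket (R μ) (R ν)) Θ = 0 := by
  cases m with
  | zero =>
    obtain rfl : μ = ν := Subsingleton.elim (α := Fin 1) μ ν
    have := hpmc.dim_eq
    have := hpmc.k_le
    rw [C.bracket_self_eq_zero (by omega)]
    funext p
    exact map_zero _
  | succ m => exact hpmc.iotaF_bracket_eq_zero_of_closed (hR μ) (hR ν) (hRd μ) (hRd ν)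

end IsPremulticontact

/-- On a premulticontact manifold `(P, Θ, ω)` with characteristic
distribution `𝒞` of rank `k > 0`, given the coordinate `(m-1)`-forms `θ_μ` of an adapted
chart (abstracted as closed, semibasic, pointwise independent forms), there are local Reeb
vector fields `R_μ` with `i(R_μ)Θ = θ_μ` such that `𝕽 = ⟨R_μ⟩ + Γ(𝒞)`; they are unique up
to the addition of sections of `𝒞`, and `[R_μ, R_ν] ∈ Γ(𝒞)`. -/
theorem premulticontact_local_reeb_fields
    {P E : Type} [AddCommGroup E] [Module ℝ E] (C : DiffCalc P E)
    {m N k : ℕ} (hk : 0 < k) (Θ ω : Form P E (m + 1))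
    (hpmc : IsPremulticontact C m N k Θ ω)
    (θ : Fin (m + 1) → Form P E m)
    (hsb : ∀ μ, SemibasicPt ω (θ μ))
    (hclosed : ∀ μ, C.d (θ μ) = 0)
    (hindep : ∀ p, LinearIndependent ℝ fun μ => θ μ p) :
    ∃ R : Fin (m + 1) → VF P E,
      (∀ μ, IsReebField C Θ ω (R μ)) ∧
      (∀ μ, iotaF (R μ) Θ = θ μ) ∧
      (∀ S : VF P E, IsReebField C Θ ω S →
        ∃ g : Fin (m + 1) → P → ℝ,
          ∀ p, S p - ∑ μ, g μ p • R μ p ∈ charSet C Θ ω p) ∧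
      (∀ R' : Fin (m + 1) → VF P E,
        (∀ μ, IsReebField C Θ ω (R' μ)) → (∀ μ, iotaF (R' μ) Θ = θ μ) →
          ∀ μ p, R μ p - R' μ p ∈ charSet C Θ ω p) ∧
      ∀ μ ν p, C.bracket (R μ) (R ν) p ∈ charSet C Θ ω p := by
  choose R hR hRθ using fun μ => hpmc.exists_isReebField_iotaF_eq (hsb μ)
  have hθp : ∀ {R' : Fin (m + 1) → VF P E}, (∀ μ, iotaF (R' μ) Θ = θ μ) →
      ∀ p μ, (Θ p).curryLeft (R' μ p) = θ μ p := fun h p μ => congrFun (h μ) p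
  have hRθp := hθp hRθ
  have hchar : ∀ p {v}, v ∈ reebSub C Θ ω p → (Θ p).curryLeft v = 0 → v ∈ charSet C Θ ω p :=
    fun p _ hv => hpmc.mem_charSet_of_curryLeft_eq_zero (hindep p) (fun μ => hR μ p) (hRθp p) hv
  refine ⟨R, hR, hRθ, fun S hS => ?_, fun R' hR' hR'θ μ p => ?_, fun μ ν p => ?_⟩
  · choose g hg using fun p =>
      hpmc.exists_curryLeft_eq_sum (hindep p) (fun μ => hR μ p) (hRθp p) (hS p)
    refine ⟨fun μ p => g p μ, fun p => hchar p ?_ ?_⟩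
    · exact sub_mem (hS p) (sum_mem fun μ _ => Submodule.smul_mem _ _ (hR μ p))
    · simp [hg p, hRθp p]
  · exact hchar p (sub_mem (hR μ p) (hR' μ p)) (by simp [hRθp, hθp hR'θ])
  · exact hchar p (hpmc.isReebField_bracket (hR μ) (hR ν) p) <| congrFun
      (hpmc.iotaF_bracket_family_eq_zero hk hR (fun μ => hRθ μ ▸ hclosed μ) μ ν) p
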